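/- Let χ(y) = C'(1+|y|)^{-α/2} with C' > 0, and suppose 0 ≤ a(y) ≤ C(1+|y|)^{-α} for some C > 0 and α > 2d. Then with c = ∫(1+|y|)^{α/2} a(y) dy − ∫ a(y) dy, one has Aχ ≤ cχ pointwise, and consequently e^{tA} χ ≤ e^{ct} χ for all t ≥ 0. -/

import Mathlib

open MeasureTheory

/-- The one particle operator (Af)(x) = ∫ a(x-y)(f(y)-f(x)) dy. -/
noncomputable def Aop {d : ℕ} (a f : EuclideanSpace ℝ (Fin d) → ℝ)
    (x : EuclideanSpace ℝ (Fin d)) : ℝ :=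
  ∫ y, a (x - y) * (f y - f x)

/-- Iterates Aⁿ of the one particle operator. -/
noncomputable def Apow {d : ℕ} (a : EuclideanSpace ℝ (Fin d) → ℝ) :
    ℕ → (EuclideanSpace ℝ (Fin d) → ℝ) → (EuclideanSpace ℝ (Fin d) → ℝ)
  | 0, f => f
  | n + 1, f => Aop a (Apow a n f)

/-- The semigroup e^{tA} given by its exponential series, pointwise. -/
noncomputable def expA {d : ℕ} (a : EuclideanSpace ℝ (Fin d) → ℝ) (t : ℝ)
    (f : EuclideanSpace ℝ (Fin d) → ℝ) (x : EuclideanSpace ℝ (Fin d)) : ℝ :=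
  ∑' n : ℕ, t ^ n / n.factorial * Apow a n f x

/-!
Write `A = K - m`, where `K f x = ∫ a (x - y) f y dy` and `m = ∫ a`. On bounded continuous
functions `K` is linear and commutes with the scalar `m`, so `Aⁿ = ∑ (n choose k) (-m)ⁿ⁻ᵏ Kᵏ` and,
by the Cauchy product, `e^{tA} = e^{-mt} e^{tK}`. Peetre's inequality
`(1 + |y|)^{-s} ≤ (1 + |x - y|)^s (1 + |x|)^{-s}` gives `Kχ ≤ bχ` with `b = ∫ (1 + |y|)^{α/2} a`;
as `K` preserves positivity, `Kᵏχ ≤ bᵏχ`, hence `e^{tK}χ ≤ e^{bt}χ`. The decay `α > 2d` makes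
`a` and `(1 + |y|)^{α/2} a` integrable.
-/

open scoped BoundedContinuousFunction

theorem one_add_norm_le_mul_one_add_norm_sub {E : Type*} [SeminormedAddCommGroup E] (x y : E) :
    1 + ‖x‖ ≤ (1 + ‖y‖) * (1 + ‖x - y‖) := by
  have h := norm_add_le y (x - y)
  rw [add_sub_cancel] at h
  nlinarith [norm_nonneg y, norm_nonneg (x - y)]

theorem one_add_norm_rpow_neg_le_mul {E : Type*} [SeminormedAddCommGroup E] {s : ℝ} (hs : 0 ≤ s)
    (x y : E) : (1 + ‖y‖) ^ (-s) ≤ (1 + ‖x - y‖) ^ s * (1 + ‖x‖) ^ (-s) := by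
  have hx : 0 < 1 + ‖x‖ := by positivity
  have hy : 0 < 1 + ‖y‖ := by positivity
  have hxy : 0 < 1 + ‖x - y‖ := by positivity
  rw [Real.rpow_neg hx.le, Real.rpow_neg hy.le, ← div_eq_mul_inv,
    inv_le_comm₀ (by positivity) (by positivity), inv_div, div_le_iff₀ (by positivity),
    ← Real.mul_rpow hy.le hxy.le]
  exact Real.rpow_le_rpow hx.le (one_add_norm_le_mul_one_add_norm_sub x y) hs

theorem integrable_one_add_norm_rpow_mul_of_le {E : Type*} [NormedAddCommGroup E]
    [NormedSpace ℝ E] [FiniteDimensional ℝ E] [MeasurableSpace E] [BorelSpace E]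
    {μ : Measure E} [μ.IsAddHaarMeasure] {a : E → ℝ} {C α s : ℝ}
    (hsα : Module.finrank ℝ E + s < α) (hmeas : AEStronglyMeasurable a μ)
    (ha : ∀ y, 0 ≤ a y ∧ a y ≤ C / (1 + ‖y‖) ^ α) :
    Integrable (fun y => (1 + ‖y‖) ^ s * a y) μ := by
  have hweight : Continuous fun y : E => (1 + ‖y‖) ^ s :=
    (continuous_const.add continuous_norm).rpow_const fun y =>
      Or.inl (by positivity : (0 : ℝ) < 1 + ‖y‖).ne'
  refine ((integrable_one_add_norm (r := α - s) (by linarith)).const_mul C).mono'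
    (hweight.aestronglyMeasurable.mul hmeas) (ae_of_all _ fun y => ?_)
  have hy : 0 < 1 + ‖y‖ := by positivity
  rw [Real.norm_of_nonneg (mul_nonneg (Real.rpow_nonneg hy.le _) (ha y).1)]
  calc (1 + ‖y‖) ^ s * a y ≤ (1 + ‖y‖) ^ s * (C / (1 + ‖y‖) ^ α) :=
        mul_le_mul_of_nonneg_left (ha y).2 (Real.rpow_nonneg hy.le _)
    _ = C * (1 + ‖y‖) ^ (-(α - s)) := by
        rw [Real.rpow_neg hy.le, Real.rpow_sub hy]
        field_simp

theorem integral_mul_eq_zero_of_not_aestronglyMeasurable {X : Type*} [MeasurableSpace X]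
    {μ : Measure X} {f g : X → ℝ} (hg : Measurable g) (hg0 : ∀ᵐ x ∂μ, g x ≠ 0)
    (hf : ¬AEStronglyMeasurable f μ) : ∫ x, g x * f x ∂μ = 0 := by
  refine integral_undef fun hgf => hf ?_
  refine (hg.inv.aestronglyMeasurable.mul hgf.aestronglyMeasurable).congr ?_
  filter_upwards [hg0] with x hx
  simp [inv_mul_cancel_left₀ hx]

open Nat Finset in
theorem tsum_pow_div_factorial_mul_sum_choose {u : ℕ → ℝ} (s t : ℝ)
    (hu : Summable fun k => ‖t ^ k / k ! * u k‖) :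
    ∑' n, t ^ n / n ! * ∑ k ∈ range (n + 1), (n.choose k : ℝ) * s ^ (n - k) * u k =
      (∑' k, t ^ k / k ! * u k) * Real.exp (s * t) := by
  have hexp : Summable fun j => ‖(s * t) ^ j / (j ! : ℝ)‖ := by
    simpa [norm_div, norm_pow] using Real.summable_pow_div_factorial (‖s * t‖)
  rw [Real.exp_eq_exp_ℝ, NormedSpace.exp_eq_tsum_div,
    tsum_mul_tsum_eq_tsum_sum_antidiagonal_of_summable_norm hu hexp]
  refine tsum_congr fun n => ?_
  rw [Nat.sum_antidiagonal_eq_sum_range_succ_mk, mul_sum]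
  refine sum_congr rfl fun k hk => ?_
  have hkn : k ≤ n := Nat.lt_succ_iff.mp (mem_range.mp hk)
  rw [Nat.cast_choose ℝ hkn, mul_pow, ← pow_mul_pow_sub t hkn]
  field_simp

noncomputable def oneAddNormRpowNeg (E : Type*) [SeminormedAddCommGroup E] {s : ℝ} (hs : 0 ≤ s) :
    E →ᵇ ℝ :=
  .ofNormedAddCommGroup (fun y => (1 + ‖y‖) ^ (-s))
    ((continuous_const.add continuous_norm).rpow_const fun y =>
      Or.inl (by positivity : (0 : ℝ) < 1 + ‖y‖).ne')
    1 fun y => by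
      rw [Real.norm_of_nonneg (by positivity)]
      exact Real.rpow_le_one_of_one_le_of_nonpos (by simp) (by linarith)

theorem measure_setOf_one_add_norm_rpow_eq {E : Type*} [NormedAddCommGroup E] [NormedSpace ℝ E]
    [FiniteDimensional ℝ E] [Nontrivial E] [MeasurableSpace E] [BorelSpace E]
    {μ : Measure E} [μ.IsAddHaarMeasure] {s : ℝ} (hs : s ≠ 0) (x : E) :
    μ {y | (1 + ‖y‖) ^ s = (1 + ‖x‖) ^ s} = 0 := by
  refine measure_mono_null (fun y hy => ?_) (Measure.addHaar_sphere μ 0 ‖x‖)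
  simpa using Real.rpow_left_injOn hs (show (0 : ℝ) ≤ 1 + ‖y‖ by positivity)
    (show (0 : ℝ) ≤ 1 + ‖x‖ by positivity) hy

section Convolution

variable {d : ℕ} {a : EuclideanSpace ℝ (Fin d) → ℝ}

theorem integrable_kernel_mul (ha : Integrable a) (f : EuclideanSpace ℝ (Fin d) →ᵇ ℝ)
    (x : EuclideanSpace ℝ (Fin d)) : Integrable fun y => a (x - y) * f y :=
  (ha.comp_sub_left x).mul_bdd f.continuous.aestronglyMeasurable
    (ae_of_all _ f.norm_coe_le_norm)

theorem continuous_kernel_integral (ha : Integrable a) (f : EuclideanSpace ℝ (Fin d) →ᵇ ℝ) :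
    Continuous fun x => ∫ y, a (x - y) * f y := by
  simp_rw [← convolution_mul_swap]
  exact BddAbove.continuous_convolution_right_of_integrable _ ⟨‖f‖, by
    rintro _ ⟨x, rfl⟩; exact f.norm_coe_le_norm x⟩ ha f.continuous

theorem norm_kernel_integral_le (ha : Integrable a) (f : EuclideanSpace ℝ (Fin d) →ᵇ ℝ)
    (x : EuclideanSpace ℝ (Fin d)) : ‖∫ y, a (x - y) * f y‖ ≤ (∫ y, ‖a y‖) * ‖f‖ := by
  rw [← integral_sub_left_eq_self (‖a ·‖) volume x, ← integral_mul_const]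
  refine norm_integral_le_of_norm_le ((ha.comp_sub_left x).norm.mul_const _)
    (ae_of_all _ fun y => ?_)
  rw [norm_mul]
  exact mul_le_mul_of_nonneg_left (f.norm_coe_le_norm y) (norm_nonneg _)

noncomputable def convolutionEnd (ha : Integrable a) :
    Module.End ℝ (EuclideanSpace ℝ (Fin d) →ᵇ ℝ) where
  toFun f := .ofNormedAddCommGroup _ (continuous_kernel_integral ha f) _
    (norm_kernel_integral_le ha f)
  map_add' f g := by
    ext x
    simp only [BoundedContinuousFunction.coe_ofNormedAddCommGroup,
      BoundedContinuousFunction.coe_add, Pi.add_apply, mul_add]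
    exact integral_add (integrable_kernel_mul ha f x) (integrable_kernel_mul ha g x)
  map_smul' c f := by
    ext x
    simp [mul_left_comm _ c, integral_const_mul]

theorem Aop_eq_convolutionEnd_sub (ha : Integrable a) (f : EuclideanSpace ℝ (Fin d) →ᵇ ℝ) :
    Aop a f = ⇑(convolutionEnd ha f - (∫ y, a y) • f) := by
  ext x
  have hconst : Integrable fun y => a (x - y) * f x := (ha.comp_sub_left x).mul_const _
  simp only [Aop, mul_sub, integral_sub (integrable_kernel_mul ha f x) hconst, integral_mul_const,
    integral_sub_left_eq_self a volume x]
  rfl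

theorem Apow_eq_pow_apply (ha : Integrable a) (n : ℕ) (f : EuclideanSpace ℝ (Fin d) →ᵇ ℝ) :
    Apow a n f = ⇑((convolutionEnd ha - algebraMap ℝ _ (∫ y, a y)) ^ n) f := by
  induction n with
  | zero => rfl
  | succ n ih =>
    rw [Apow, ih, Aop_eq_convolutionEnd_sub ha, pow_succ', Module.End.mul_apply,
      LinearMap.sub_apply, Module.algebraMap_end_apply]

open Finset in
theorem Apow_apply_eq_sum_choose (ha : Integrable a) (n : ℕ) (f : EuclideanSpace ℝ (Fin d) →ᵇ ℝ)
    (x : EuclideanSpace ℝ (Fin d)) :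
    Apow a n f x = ∑ k ∈ range (n + 1),
      (n.choose k : ℝ) * (-∫ y, a y) ^ (n - k) * (convolutionEnd ha ^ k) f x := by
  set T := convolutionEnd ha
  have hterm : ∀ k,
      T ^ k * algebraMap ℝ _ (-∫ y, a y) ^ (n - k) * (n.choose k : Module.End ℝ _) =
        ((n.choose k : ℝ) * (-∫ y, a y) ^ (n - k)) • T ^ k := by
    intro k
    rw [Algebra.smul_def, Algebra.commutes, map_mul, map_pow, map_natCast, mul_assoc,
      (Nat.cast_commute _ _).eq]
  have hpow := (Algebra.commute_algebraMap_right (-∫ y, a y) T).add_pow n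
  rw [sum_congr rfl fun k _ => hterm k, map_neg, ← sub_eq_add_neg] at hpow
  rw [Apow_eq_pow_apply ha, hpow]
  simp [BoundedContinuousFunction.coe_sum]

theorem convolutionEnd_monotone (ha : Integrable a) (ha0 : ∀ y, 0 ≤ a y) :
    Monotone (convolutionEnd ha) := fun f g hfg x =>
  integral_mono (integrable_kernel_mul ha f x) (integrable_kernel_mul ha g x) fun y =>
    mul_le_mul_of_nonneg_left (hfg y) (ha0 _)

theorem convolutionEnd_le_integral_mul_smul (ha : Integrable a) (ha0 : ∀ y, 0 ≤ a y)
    {w : EuclideanSpace ℝ (Fin d) → ℝ} (hwa : Integrable fun y => w y * a y)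
    {f : EuclideanSpace ℝ (Fin d) →ᵇ ℝ} (hf : ∀ x y, f y ≤ w (x - y) * f x) :
    convolutionEnd ha f ≤ (∫ y, w y * a y) • f := by
  intro x
  calc ∫ y, a (x - y) * f y ≤ ∫ y, f x * (w (x - y) * a (x - y)) :=
        integral_mono (integrable_kernel_mul ha f x) ((hwa.comp_sub_left x).const_mul _)
          fun y => by nlinarith [hf x y, ha0 (x - y)]
    _ = (∫ y, w y * a y) * f x := by
        rw [integral_const_mul, integral_sub_left_eq_self (fun y => w y * a y), mul_comm]

theorem convolutionEnd_smul_oneAddNormRpowNeg_le (ha : Integrable a) (ha0 : ∀ y, 0 ≤ a y)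
    {s : ℝ} (hs : 0 ≤ s) (hwa : Integrable fun y => (1 + ‖y‖) ^ s * a y) {C' : ℝ} (hC' : 0 ≤ C') :
    convolutionEnd ha (C' • oneAddNormRpowNeg _ hs) ≤
      (∫ y, (1 + ‖y‖) ^ s * a y) • (C' • oneAddNormRpowNeg _ hs) :=
  convolutionEnd_le_integral_mul_smul ha ha0 hwa fun x y => by
    simp only [BoundedContinuousFunction.coe_smul, oneAddNormRpowNeg,
      BoundedContinuousFunction.coe_ofNormedAddCommGroup, smul_eq_mul]
    nlinarith [one_add_norm_rpow_neg_le_mul hs x y]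

theorem convolutionEnd_pow_monotone (ha : Integrable a) (ha0 : ∀ y, 0 ≤ a y) (k : ℕ) :
    Monotone ⇑(convolutionEnd ha ^ k) := by
  rw [Module.End.coe_pow]
  exact (convolutionEnd_monotone ha ha0).iterate k

theorem convolutionEnd_pow_le_pow_smul (ha : Integrable a) (ha0 : ∀ y, 0 ≤ a y)
    {f : EuclideanSpace ℝ (Fin d) →ᵇ ℝ} {b : ℝ} (hb : 0 ≤ b) (hf : convolutionEnd ha f ≤ b • f)
    (k : ℕ) : (convolutionEnd ha ^ k) f ≤ b ^ k • f := by
  induction k with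
  | zero => simp
  | succ k ih =>
    calc (convolutionEnd ha ^ (k + 1)) f = (convolutionEnd ha ^ k) (convolutionEnd ha f) := by
          rw [pow_succ, Module.End.mul_apply]
      _ ≤ (convolutionEnd ha ^ k) (b • f) := convolutionEnd_pow_monotone ha ha0 k hf
      _ = b • (convolutionEnd ha ^ k) f := map_smul _ _ _
      _ ≤ b • b ^ k • f := fun x => mul_le_mul_of_nonneg_left (ih x) hb
      _ = b ^ (k + 1) • f := by rw [smul_smul, pow_succ']

theorem Aop_le_of_convolutionEnd_le (ha : Integrable a) {f : EuclideanSpace ℝ (Fin d) →ᵇ ℝ}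
    {b : ℝ} (hf : convolutionEnd ha f ≤ b • f) (x : EuclideanSpace ℝ (Fin d)) :
    Aop a f x ≤ (b - ∫ y, a y) * f x := by
  rw [Aop_eq_convolutionEnd_sub ha, sub_mul]
  exact sub_le_sub_right (hf x) _

open Nat in
theorem expA_le_of_convolutionEnd_le (ha : Integrable a) (ha0 : ∀ y, 0 ≤ a y)
    {f : EuclideanSpace ℝ (Fin d) →ᵇ ℝ} (hf0 : 0 ≤ f) {b : ℝ} (hb : 0 ≤ b)
    (hf : convolutionEnd ha f ≤ b • f) {t : ℝ} (ht : 0 ≤ t) (x : EuclideanSpace ℝ (Fin d)) :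
    expA a t f x ≤ Real.exp ((b - ∫ y, a y) * t) * f x := by
  set u : ℕ → ℝ := fun k => (convolutionEnd ha ^ k) f x
  have hu_le : ∀ k, u k ≤ b ^ k * f x := fun k =>
    convolutionEnd_pow_le_pow_smul ha ha0 hb hf k x
  have hu0 : ∀ k, 0 ≤ u k := fun k => by
    simpa using convolutionEnd_pow_monotone ha ha0 k hf0 x
  have hdom : ∀ k, ‖t ^ k / k ! * u k‖ ≤ (t * b) ^ k / k ! * f x := fun k => by
    rw [Real.norm_of_nonneg (by have := hu0 k; positivity), mul_pow, mul_div_right_comm,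
      mul_assoc]
    exact mul_le_mul_of_nonneg_left (hu_le k) (by positivity)
  have hsum : Summable fun k => (t * b) ^ k / k ! * f x :=
    (Real.summable_pow_div_factorial _).mul_right _
  have hu : Summable fun k => ‖t ^ k / k ! * u k‖ :=
    hsum.of_nonneg_of_le (fun _ => norm_nonneg _) hdom
  calc expA a t f x
      = ∑' n, t ^ n / n ! * ∑ k ∈ Finset.range (n + 1),
          (n.choose k : ℝ) * (-∫ y, a y) ^ (n - k) * u k := by
        simp only [expA, Apow_apply_eq_sum_choose ha]; rfl
    _ = (∑' k, t ^ k / k ! * u k) * Real.exp ((-∫ y, a y) * t) :=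
        tsum_pow_div_factorial_mul_sum_choose _ _ hu
    _ ≤ (∑' k, (t * b) ^ k / k ! * f x) * Real.exp ((-∫ y, a y) * t) := by
        refine mul_le_mul_of_nonneg_right ?_ (Real.exp_nonneg _)
        exact hu.of_norm.tsum_le_tsum (fun k => (Real.le_norm_self _).trans (hdom k)) hsum
    _ = Real.exp ((b - ∫ y, a y) * t) * f x := by
        rw [tsum_mul_right, (NormedSpace.expSeries_div_hasSum_exp (t * b)).tsum_eq,
          ← Real.exp_eq_exp_ℝ, mul_right_comm, ← Real.exp_add]
        ring_nf

end Convolution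

theorem nontrivial_of_not_aestronglyMeasurable {X : Type*} [MeasurableSpace X] {μ : Measure X}
    {f : X → ℝ} (hf : ¬AEStronglyMeasurable f μ) : Nontrivial X := by
  by_contra h
  rw [not_nontrivial_iff_subsingleton] at h
  exact hf Subsingleton.measurable.aestronglyMeasurable

section Degenerate

variable {d : ℕ} {a : EuclideanSpace ℝ (Fin d) → ℝ}

theorem Aop_eq_zero_of_not_aestronglyMeasurable (ha : ¬AEStronglyMeasurable a volume)
    {f : EuclideanSpace ℝ (Fin d) → ℝ} (hf : Measurable f) {x : EuclideanSpace ℝ (Fin d)}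
    (hlevel : volume {y | f y = f x} = 0) : Aop a f x = 0 := by
  have hshift : ¬AEStronglyMeasurable (fun y => a (x - y)) volume := fun h => ha <| by
    simpa [Function.comp_def] using
      h.comp_measurePreserving (Measure.measurePreserving_sub_left volume x)
  simp only [Aop, mul_comm (a _)]
  refine integral_mul_eq_zero_of_not_aestronglyMeasurable (hf.sub_const _) ?_ hshift
  exact measure_mono_null (fun y hy => by simpa [sub_eq_zero] using hy) hlevel

theorem Apow_succ_eq_zero {f : EuclideanSpace ℝ (Fin d) → ℝ} (hf : Aop a f = 0) (n : ℕ) :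
    Apow a (n + 1) f = 0 := by
  induction n with
  | zero => exact hf
  | succ n ih =>
    ext x
    rw [Apow, ih]
    simp [Aop]

theorem expA_eq_self_of_Aop_eq_zero {f : EuclideanSpace ℝ (Fin d) → ℝ} (hf : Aop a f = 0)
    (t : ℝ) (x : EuclideanSpace ℝ (Fin d)) : expA a t f x = f x := by
  rw [expA, tsum_eq_single 0 fun n hn => ?_]
  · simp [Apow]
  · obtain ⟨n, rfl⟩ := Nat.exists_eq_succ_of_ne_zero hn
    simp [Apow_succ_eq_zero hf]

end Degenerate

theorem one_particle_semigroup_chi_bound_general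
    (d : ℕ) (a : EuclideanSpace ℝ (Fin d) → ℝ) (C C' α : ℝ)
    (hC' : 0 < C') (hα : 2 * (d : ℝ) < α)
    (ha : ∀ y, 0 ≤ a y ∧ a y ≤ C / (1 + ‖y‖) ^ α)
    (χ : EuclideanSpace ℝ (Fin d) → ℝ)
    (hχ : χ = fun y => C' * (1 + ‖y‖) ^ (-(α / 2)))
    (c : ℝ) (hc : c = (∫ y, (1 + ‖y‖) ^ (α / 2) * a y) - ∫ y, a y) :
    (∀ x, Aop a χ x ≤ c * χ x) ∧
    ∀ t : ℝ, 0 ≤ t → ∀ x, expA a t χ x ≤ Real.exp (c * t) * χ x := by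
  have hs : 0 < α / 2 := by linarith [(Nat.cast_nonneg d : (0 : ℝ) ≤ d)]
  have hdim : Module.finrank ℝ (EuclideanSpace ℝ (Fin d)) + α / 2 < α := by
    rw [finrank_euclideanSpace_fin]; linarith
  by_cases hmeas : AEStronglyMeasurable a volume
  · have ha0 : ∀ y, 0 ≤ a y := fun y => (ha y).1
    have hint : Integrable a := by
      simpa using integrable_one_add_norm_rpow_mul_of_le (s := 0) (by linarith) hmeas ha
    have hwint := integrable_one_add_norm_rpow_mul_of_le hdim hmeas ha
    set χb := C' • oneAddNormRpowNeg (EuclideanSpace ℝ (Fin d)) hs.le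
    have hχb : ⇑χb = χ := by rw [hχ]; rfl
    have hχb0 : 0 ≤ χb := fun y => show 0 ≤ χb y by rw [hχb, hχ]; positivity
    have hK := convolutionEnd_smul_oneAddNormRpowNeg_le hint ha0 hs.le hwint hC'.le
    have hb : 0 ≤ ∫ y, (1 + ‖y‖) ^ (α / 2) * a y :=
      integral_nonneg fun y => mul_nonneg (by positivity) (ha0 y)
    rw [← hχb, hc]
    exact ⟨Aop_le_of_convolutionEnd_le hint hK,
      fun t ht => expA_le_of_convolutionEnd_le hint ha0 hχb0 hb hK ht⟩
  -- Otherwise every integral in the statement is the junk value `0`.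
  · have := nontrivial_of_not_aestronglyMeasurable hmeas
    have hc0 : c = 0 := by
      rw [hc, integral_undef fun h => hmeas h.aestronglyMeasurable,
        integral_mul_eq_zero_of_not_aestronglyMeasurable (by fun_prop)
          (ae_of_all _ fun y => by positivity) hmeas, sub_zero]
    have hAχ : Aop a χ = 0 := funext fun x => by
      refine Aop_eq_zero_of_not_aestronglyMeasurable hmeas (by rw [hχ]; fun_prop) ?_
      simpa [hχ, hC'.ne'] using
        measure_setOf_one_add_norm_rpow_eq (μ := volume) (neg_ne_zero.mpr hs.ne') x
    exact ⟨fun x => by simp [hAχ, hc0],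
      fun t _ x => by simp [expA_eq_self_of_Aop_eq_zero hAχ, hc0]⟩

/-- With χ(y) = C'(1+|y|)^{-α/2}, 0 ≤ a ≤ C(1+|·|)^{-α}, α > 2d, and
c = ∫(1+|y|)^{α/2} a(y) dy − ∫ a(y) dy, one has Aχ ≤ cχ pointwise and
e^{tA}χ ≤ e^{ct}χ for all t ≥ 0. -/
theorem one_particle_semigroup_chi_bound
    (d : ℕ) (a : EuclideanSpace ℝ (Fin d) → ℝ) (C C' α : ℝ)
    (hC' : 0 < C') (hC : 0 < C) (hα : 2 * (d : ℝ) < α)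
    (ha : ∀ y, 0 ≤ a y ∧ a y ≤ C / (1 + ‖y‖) ^ α)
    (χ : EuclideanSpace ℝ (Fin d) → ℝ)
    (hχ : χ = fun y => C' * (1 + ‖y‖) ^ (-(α / 2)))
    (c : ℝ) (hc : c = (∫ y, (1 + ‖y‖) ^ (α / 2) * a y) - ∫ y, a y) :
    (∀ x, Aop a χ x ≤ c * χ x) ∧
    ∀ t : ℝ, 0 ≤ t → ∀ x, expA a t χ x ≤ Real.exp (c * t) * χ x :=
  one_particle_semigroup_chi_bound_general d a C C' α hC' hα ha χ hχ c hc
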